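/- Let n ≥ 3 be odd and let Q be the root lattice of type A_{n-1} with the action of A = S_n × S₂ (S_n acting by the standard Weyl group action, S₂ by −1). Then Q is a quasi-permutation A-lattice. -/

import Mathlib

/-! Let `n = 2k + 1`. The root lattice embeds in `P = ℤ[{1..n} × {±1}] ⊕ ℤ` by
`v ↦ Σ s • vᵢ e_{i,s}`; the sign by which `S₂` acts on `Q` is absorbed by letting `S₂` swap
`e_{i,1}` and `e_{i,-1}`. The equivariant map `P → P' = ℤ[{1..n}] ⊕ ℤ[{±1}]`,
`x ↦ (x₀ - x_{i,1} - x_{i,-1})ᵢ ⊕ (Σᵢ x_{i,s} - k x₀)ₛ`, has coordinate sum `(n - 2k) x₀ = x₀`.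
This recovers `x₀` from the image, which makes the map surjective and its kernel exactly the
image of `Q`. -/

universe u

structure GLat (Γ : Type u) [Group Γ] : Type (u+1) where
  carrier : Type u
  [acg : AddCommGroup carrier]
  [act : DistribMulAction Γ carrier]
  [free : Module.Free ℤ carrier]
  [fin : Module.Finite ℤ carrier]

attribute [instance] GLat.acg GLat.act GLat.free GLat.fin

instance {Γ : Type u} [Group Γ] : CoeSort (GLat Γ) (Type u) := ⟨GLat.carrier⟩

namespace GLat

variable {Γ : Type u} [Group Γ]

/-- A Γ-equivariant additive map. -/
def Equivariant {L M : GLat Γ} (f : L →+ M) : Prop :=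
  ∀ (γ : Γ) (x : L), f (γ • x) = γ • f x

/-- A permutation Γ-lattice: it has a ℤ-basis permuted by Γ. -/
def IsPermutation (P : GLat Γ) : Prop :=
  ∃ (ι : Type u) (b : Module.Basis ι ℤ P.carrier),
    ∀ γ : Γ, ∃ σ : Equiv.Perm ι, ∀ i, γ • b i = b (σ i)

/-- Short exactness of `0 → L → M → N → 0`. -/
def SES {L M N : GLat Γ} (f : L →+ M) (g : M →+ N) : Prop :=
  Function.Injective f ∧ Function.Surjective g ∧ g.ker = f.range

/-- Quasi-permutation lattice: fits in `0 → L → P → P' → 0` with `P, P'` permutation. -/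
def IsQuasiPermutation (L : GLat Γ) : Prop :=
  ∃ (P P' : GLat Γ) (f : L →+ P) (g : P →+ P'),
    IsPermutation P ∧ IsPermutation P' ∧ Equivariant f ∧ Equivariant g ∧ SES f g

/-- Colliot-Thélène–Sansuc equivalence of Γ-lattices. -/
def LatEquiv (L L' : GLat Γ) : Prop :=
  ∃ (E P P' : GLat Γ) (f : L →+ E) (g : E →+ P)
    (f' : L' →+ E) (g' : E →+ P'),
    IsPermutation P ∧ IsPermutation P' ∧
    Equivariant f ∧ Equivariant g ∧ Equivariant f' ∧ Equivariant g' ∧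
    SES f g ∧ SES f' g'

/-- The zero lattice. -/
def zero : GLat Γ := { carrier := PUnit }

/-- Direct sum of two Γ-lattices. -/
def prod (L M : GLat Γ) : GLat Γ := { carrier := L × M }

/-- Quasi-invertible: a direct summand of a quasi-permutation lattice. -/
def IsQuasiInvertible (L : GLat Γ) : Prop :=
  ∃ M : GLat Γ, IsQuasiPermutation (L.prod M)

end GLat

open scoped BigOperators

/-- The group `A = Sₙ × S₂`, with `S₂` realized as `ℤˣ = {±1}`. -/
abbrev AGroup (n : ℕ) := Equiv.Perm (Fin n) × ℤˣ

/-- The action of `A = Sₙ × S₂` on `ℤⁿ`: `Sₙ` permutes coordinates and the nontrivial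
element of `S₂` acts by multiplication by `−1`. -/
def aAct (n : ℕ) (a : AGroup n) (x : Fin n → ℤ) : Fin n → ℤ :=
  fun i => (a.2 : ℤ) * x (a.1.symm i)

/-- The coordinate-sum homomorphism `ℤⁿ → ℤ`. -/
def sumHom (n : ℕ) : (Fin n → ℤ) →+ ℤ where
  toFun x := ∑ i, x i
  map_zero' := by simp
  map_add' x y := by simp [Finset.sum_add_distrib]

attribute [local instance] arrowAction

@[simp]
lemma arrowAction_smul_apply {G A B : Type*} [DivisionMonoid G] [MulAction G A] (g : G) (F : A → B)
    (a : A) : (g • F) a = F (g⁻¹ • a) := rfl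

lemma Fintype.sum_comp_smul {G Y M : Type*} [Group G] [MulAction G Y] [Fintype Y]
    [AddCommMonoid M] (g : G) (f : Y → M) : ∑ y, f (g • y) = ∑ y, f y :=
  Fintype.sum_equiv (MulAction.toPerm g) _ _ fun _ => rfl

@[simp]
lemma sumHom_apply (n : ℕ) (v : Fin n → ℤ) : sumHom n v = ∑ i, v i := rfl

namespace GLat

variable (G : Type u) [Group G] (X : Type u) [Finite X] [MulAction G X]

abbrev ofMulAction : GLat G :=
  { carrier := X → ℤ
    act := { smul_zero := fun _ => rfl, smul_add := fun _ _ _ => rfl } }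

theorem isPermutation_ofMulAction : (ofMulAction G X).IsPermutation := by
  classical
  refine ⟨X, Pi.basisFun ℤ X, fun g => ⟨MulAction.toPerm g, fun i => ?_⟩⟩
  funext x
  show Pi.single (M := fun _ => ℤ) i 1 (g⁻¹ • x) = Pi.single (M := fun _ => ℤ) (g • i) 1 x
  simp only [Pi.single_apply, inv_smul_eq_iff]

end GLat

namespace RootLattice

variable (n : ℕ)

instance : MulAction (AGroup n) (Fin n) := MulAction.compHom _ (MonoidHom.fst _ _)

instance : MulAction (AGroup n) ℤˣ := MulAction.compHom _ (MonoidHom.snd _ _)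

def signedEmbedding : (Fin n → ℤ) →+ ((Fin n × ℤˣ) ⊕ Unit → ℤ) :=
  AddMonoidHom.mk' (fun v => Sum.elim (fun p => p.2 * v p.1) 0) fun v w => by
    funext x
    rcases x with ⟨i, s⟩ | _
    · exact mul_add _ _ _
    · exact (add_zero 0).symm

def quotientMap (k : ℤ) : ((Fin n × ℤˣ) ⊕ Unit → ℤ) →+ (Fin n ⊕ ℤˣ → ℤ) :=
  AddMonoidHom.mk' (fun x => Sum.elim (fun i => x (.inr ()) - ∑ s, x (.inl (i, s)))
      (fun s => ∑ i, x (.inl (i, s)) - k * x (.inr ()))) fun x y => by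
    funext z
    rcases z with i | s <;>
      simp only [Pi.add_apply, Sum.elim_inl, Sum.elim_inr, Finset.sum_add_distrib] <;> ring

@[simp]
lemma signedEmbedding_inl (v : Fin n → ℤ) (i : Fin n) (s : ℤˣ) :
    signedEmbedding n v (.inl (i, s)) = s * v i := rfl

@[simp]
lemma signedEmbedding_inr (v : Fin n → ℤ) : signedEmbedding n v (.inr ()) = 0 := rfl

@[simp]
lemma quotientMap_inl (k : ℤ) (x : (Fin n × ℤˣ) ⊕ Unit → ℤ) (i : Fin n) :
    quotientMap n k x (.inl i) = x (.inr ()) - ∑ s, x (.inl (i, s)) := rfl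

@[simp]
lemma quotientMap_inr (k : ℤ) (x : (Fin n × ℤˣ) ⊕ Unit → ℤ) (s : ℤˣ) :
    quotientMap n k x (.inr s) = ∑ i, x (.inl (i, s)) - k * x (.inr ()) := rfl

lemma signedEmbedding_injective : Function.Injective (signedEmbedding n) :=
  fun v w h => funext fun i => by simpa using congrFun h (.inl (i, 1))

lemma signedEmbedding_aAct (a : AGroup n) (v : Fin n → ℤ) :
    signedEmbedding n (aAct n a v) = a • signedEmbedding n v := by
  funext x
  rcases x with ⟨i, s⟩ | _
  · simp only [signedEmbedding_inl, aAct, arrowAction_smul_apply, Sum.smul_inl, Prod.smul_mk,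
      MulAction.compHom_smul_def, MonoidHom.coe_fst, MonoidHom.coe_snd, Prod.fst_inv,
      Prod.snd_inv, Equiv.Perm.smul_def, Equiv.Perm.coe_inv, Int.units_inv_eq_self, smul_eq_mul,
      Units.val_mul]
    ring
  · rfl

lemma quotientMap_smul (k : ℤ) (a : AGroup n) (x : (Fin n × ℤˣ) ⊕ Unit → ℤ) :
    quotientMap n k (a • x) = a • quotientMap n k x := by
  funext z
  rcases z with i | s
  · simp only [quotientMap_inl, arrowAction_smul_apply, Sum.smul_inl, Sum.smul_inr, Prod.smul_mk]
    rw [Fintype.sum_comp_smul a⁻¹ (fun s => x (.inl (a⁻¹ • i, s)))]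
  · simp only [quotientMap_inr, arrowAction_smul_apply, Sum.smul_inl, Sum.smul_inr, Prod.smul_mk]
    rw [Fintype.sum_comp_smul a⁻¹ (fun i => x (.inl (i, a⁻¹ • s)))]

lemma sum_quotientMap (k : ℤ) (x : (Fin n × ℤˣ) ⊕ Unit → ℤ) :
    ∑ z, quotientMap n k x z = (n - 2 * k) * x (.inr ()) := by
  simp only [Fintype.sum_sum_type, quotientMap_inl, quotientMap_inr, Finset.sum_sub_distrib,
    Finset.sum_const, Finset.card_univ, Fintype.card_fin, Fintype.card_units_int, nsmul_eq_mul]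
  rw [Finset.sum_comm]
  push_cast
  ring

variable {n}

lemma quotientMap_surjective {k : ℤ} (hk : (n : ℤ) = 2 * k + 1) :
    Function.Surjective (quotientMap n k) := by
  classical
  intro y
  have i₀ : Fin n := ⟨0, by omega⟩
  set u := ∑ z, y z with hu
  set c := y (.inr 1) + k * u with hc
  let x₁ : Fin n → ℤ := Pi.single i₀ c
  refine ⟨Sum.elim (fun p => if p.2 = 1 then x₁ p.1 else u - y (.inl p.1) - x₁ p.1) fun _ => u, ?_⟩
  funext z
  rcases z with i | s
  · simp
  · rcases Int.units_eq_one_or s with rfl | rfl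
    · simp [x₁, c]
    · simp only [quotientMap_inr, Sum.elim_inl, Sum.elim_inr, neg_units_ne_self, ↓reduceIte,
        Finset.sum_sub_distrib, Finset.sum_const, Finset.card_univ, Fintype.card_fin,
        Int.nsmul_eq_mul, Finset.sum_pi_single', Finset.mem_univ, x₁]
      rw [Fintype.sum_sum_type, UnitsInt.univ, Finset.sum_pair (by decide)] at hu
      linear_combination u * hk + hu - hc

lemma ker_quotientMap {k : ℤ} (hk : (n : ℤ) = 2 * k + 1) :
    (quotientMap n k).ker = (sumHom n).ker.map (signedEmbedding n) := by
  ext x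
  simp only [AddMonoidHom.mem_ker, AddSubgroup.mem_map]
  constructor
  · intro hx
    have h₀ : x (.inr ()) = 0 := by
      have := sum_quotientMap n k x
      simp only [hx, Pi.zero_apply, Finset.sum_const_zero, hk] at this
      linarith
    have hneg : ∀ i, x (.inl (i, -1)) = -x (.inl (i, 1)) := fun i => by
      have := congrFun hx (.inl i)
      simp only [quotientMap_inl, h₀, UnitsInt.univ, Finset.sum_pair (by decide : (1 : ℤˣ) ≠ -1),
        Pi.zero_apply] at this
      linarith
    refine ⟨fun i => x (.inl (i, 1)), by simpa [h₀] using congrFun hx (.inr 1), ?_⟩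
    funext z
    rcases z with ⟨i, s⟩ | ⟨⟨⟩⟩
    · rcases Int.units_eq_one_or s with rfl | rfl <;> simp [hneg]
    · simp [h₀]
  · rintro ⟨v, hv, rfl⟩
    funext z
    rcases z with i | s
    · simp
    · simpa [← Finset.mul_sum] using hv

end RootLattice

theorem root_lattice_quasiPermutation_SnxS2_general
    (n : ℕ) (hodd : Odd n)
    (Q : GLat (AGroup n)) (j : Q.carrier →+ (Fin n → ℤ))
    (hinj : Function.Injective j)
    (hrange : j.range = (sumHom n).ker)
    (hequi : ∀ (a : AGroup n) (q : Q.carrier), j (a • q) = aAct n a (j q)) :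
    Q.IsQuasiPermutation := by
  obtain ⟨k, hk⟩ := hodd
  have hk : (n : ℤ) = 2 * k + 1 := by exact_mod_cast hk
  refine ⟨.ofMulAction _ ((Fin n × ℤˣ) ⊕ Unit), .ofMulAction _ (Fin n ⊕ ℤˣ),
    (RootLattice.signedEmbedding n).comp j, RootLattice.quotientMap n k,
    GLat.isPermutation_ofMulAction _ _, GLat.isPermutation_ofMulAction _ _,
    fun a q => ?_, RootLattice.quotientMap_smul n k,
    (RootLattice.signedEmbedding_injective n).comp hinj, RootLattice.quotientMap_surjective hk, ?_⟩
  · rw [AddMonoidHom.comp_apply, hequi, RootLattice.signedEmbedding_aAct]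
    rfl
  · rw [AddMonoidHom.range_comp, hrange, RootLattice.ker_quotientMap hk]

/-- Let `n ≥ 3` be odd and let `Q` be the root lattice of type `A_{n-1}`, i.e. the sublattice
of `ℤⁿ` of vectors with zero coordinate sum, with the action of `A = Sₙ × S₂` (`Sₙ` permuting
coordinates, `S₂` acting by `−1`).  Then `Q` is a quasi-permutation `A`-lattice. -/
theorem root_lattice_quasiPermutation_SnxS2
    (n : ℕ) (hn3 : 3 ≤ n) (hodd : Odd n)
    (Q : GLat (AGroup n)) (j : Q.carrier →+ (Fin n → ℤ))
    (hinj : Function.Injective j)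
    (hrange : j.range = (sumHom n).ker)
    (hequi : ∀ (a : AGroup n) (q : Q.carrier), j (a • q) = aAct n a (j q)) :
    Q.IsQuasiPermutation :=
  root_lattice_quasiPermutation_SnxS2_general n hodd Q j hinj hrange hequi
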